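/- In the Borda CCAV-to-CCAUV reduction: there exists Q_2' ⊆ Q_2 such that c* is a Borda co-winner of M_2 ∘ Q_2' if and only if there exists Q_1' ⊆ Q_1 of size at most k such that c* is a Borda co-winner of M_1 ∘ Q_1'. In particular, s(T_2',d_2) = s(T_2',c*) - k + |Q_2'|, so c* defeats d_2 in M_2 ∘ Q_2' if and only if |Q_2'| ≤ k. -/
import Mathlib


/-- Borda score of `c ∈ C_1` in `T_1' = M_1 ∘ Q_1'` (with `A` the set of chosen
unregistered voters): `sM1` gives the scores from `M_1` and `sQ1 i` the Borda scores of
ballot `Q_1^i`. -/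
def S1 {n : ℕ} {C1 : Type} (sM1 : C1 → ℕ) (sQ1 : Fin n → C1 → ℕ)
    (A : Finset (Fin n)) (c : C1) : ℕ :=
  sM1 c + ∑ i ∈ A, sQ1 i c

/-- Borda score of `x ∈ C_2 = C_1 ∪ {d_1, d_2}` in `T_2' = M_2 ∘ Q_2'` (with
`d_1 = Sum.inr 0`, `d_2 = Sum.inr 1`): each ballot `Q_2^i = (d_1, d_2) ∘ Q_1^i` gives
`d_1` score `m+1`, `d_2` score `m`, and each `c ∈ C_1` its score in `Q_1^i`. -/
def S2 {n : ℕ} {C1 : Type} (m : ℕ) (sM2 : C1 ⊕ Fin 2 → ℕ) (sQ1 : Fin n → C1 → ℕ)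
    (Q' : Finset (Fin n)) (x : C1 ⊕ Fin 2) : ℕ :=
  sM2 x + ∑ i ∈ Q', Sum.elim (sQ1 i) (fun j => if j = 0 then m + 1 else m) x

/-- The Borda CCAV-to-CCAUV reduction: some `Q_2' ⊆ Q_2` makes `c*` a Borda co-winner of
`M_2 ∘ Q_2'` iff some `Q_1' ⊆ Q_1` of size at most `k` makes `c*` a Borda co-winner of
`M_1 ∘ Q_1'`. In particular `s(T_2',d_2) + k = s(T_2',c*) + |Q_2'|`, so `c*` defeats `d_2`
iff `|Q_2'| ≤ k`. -/
theorem borda_ccav_ccauv_reduction (n m k lam : ℕ) (hm : 1 ≤ m)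
    (C1 : Type) [Fintype C1] [DecidableEq C1] (hC1 : Fintype.card C1 = m)
    (cstar : C1) (sM1 : C1 → ℕ) (sQ1 : Fin n → C1 → ℕ)
    (hq1 : ∀ i c, sQ1 i c < m) (hstar : ∀ i, sQ1 i cstar + 1 = m)
    (sM2 : C1 ⊕ Fin 2 → ℕ) (hlam : 0 < lam)
    (hd1 : sM2 (Sum.inr 0) < lam)
    (hd2 : sM2 (Sum.inr 1) + k = lam + 2 * m * n + sM1 cstar)
    (hM2c : ∀ c : C1, sM2 (Sum.inl c) = lam + 2 * m * n + sM1 c) :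
    ((∃ Q' : Finset (Fin n), ∀ x, S2 m sM2 sQ1 Q' x ≤ S2 m sM2 sQ1 Q' (Sum.inl cstar))
        ↔ (∃ A : Finset (Fin n), A.card ≤ k ∧ ∀ c, S1 sM1 sQ1 A c ≤ S1 sM1 sQ1 A cstar))
    ∧ ∀ Q' : Finset (Fin n),
        S2 m sM2 sQ1 Q' (Sum.inr 1) + k = S2 m sM2 sQ1 Q' (Sum.inl cstar) + Q'.card := by
  have hinl : ∀ (Q' : Finset (Fin n)) (c : C1),
      S2 m sM2 sQ1 Q' (Sum.inl c) = lam + 2 * m * n + S1 sM1 sQ1 Q' c := by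
    intro Q' c
    simp only [S2, S1, Sum.elim_inl, hM2c]
    omega
  have hsumstar : ∀ Q' : Finset (Fin n),
      (∑ i ∈ Q', sQ1 i cstar) + Q'.card = Q'.card * m := by
    intro Q'
    calc (∑ i ∈ Q', sQ1 i cstar) + Q'.card
        = ∑ i ∈ Q', (sQ1 i cstar + 1) := by
          rw [Finset.sum_add_distrib, Finset.sum_const, smul_eq_mul, mul_one]
      _ = ∑ i ∈ Q', m := by exact Finset.sum_congr rfl fun i _ => hstar i
      _ = Q'.card * m := by rw [Finset.sum_const, smul_eq_mul]
  have hd2' : ∀ Q' : Finset (Fin n),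
      S2 m sM2 sQ1 Q' (Sum.inr 1) = sM2 (Sum.inr 1) + Q'.card * m := by
    intro Q'
    simp only [S2, Sum.elim_inr]
    norm_num
  have hd1' : ∀ Q' : Finset (Fin n),
      S2 m sM2 sQ1 Q' (Sum.inr 0) = sM2 (Sum.inr 0) + Q'.card * (m + 1) := by
    intro Q'
    simp only [S2, Sum.elim_inr]
    norm_num
  have h2 : ∀ Q' : Finset (Fin n),
      S2 m sM2 sQ1 Q' (Sum.inr 1) + k = S2 m sM2 sQ1 Q' (Sum.inl cstar) + Q'.card := by
    intro Q'
    rw [hd2', hinl]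
    have h1 := hsumstar Q'
    simp only [S1]
    omega
  refine ⟨⟨?_, ?_⟩, h2⟩
  · rintro ⟨Q', hQ⟩
    refine ⟨Q', ?_, ?_⟩
    · have := hQ (Sum.inr 1)
      have := h2 Q'
      omega
    · intro c
      have := hQ (Sum.inl c)
      rw [hinl, hinl] at this
      omega
  · rintro ⟨A, hAk, hA⟩
    refine ⟨A, ?_⟩
    intro x
    rcases x with c | j
    · rw [hinl, hinl]
      have := hA c
      omega
    · have hcard : A.card ≤ n := by
        have := Finset.card_le_univ A
        simpa using this
      fin_cases j
      · show S2 m sM2 sQ1 A (Sum.inr 0) ≤ S2 m sM2 sQ1 A (Sum.inl cstar)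
        rw [hd1', hinl]
        have h1 : A.card * (m + 1) ≤ 2 * m * n := by
          calc A.card * (m + 1) ≤ n * (m + 1) := Nat.mul_le_mul_right _ hcard
            _ ≤ n * (2 * m) := Nat.mul_le_mul_left _ (by omega)
            _ = 2 * m * n := by ring
        omega
      · show S2 m sM2 sQ1 A (Sum.inr 1) ≤ S2 m sM2 sQ1 A (Sum.inl cstar)
        have := h2 A
        omega
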